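/- For m even, m ≥ 4, and any graph H_n of order n ≥ 2, the diameter of C_m ⋄ H_n equals m/2 + 1. -/

import Mathlib

open SimpleGraph

/-- A walk is a rainbow vertex path: it is a path and its internal vertices
receive pairwise distinct colors. -/
def IsRainbowPath {V : Type*} (G : SimpleGraph V) {k : ℕ} (c : V → Fin k)
    {u v : V} (p : G.Walk u v) : Prop :=
  p.IsPath ∧ (p.support.tail.dropLast.map c).Nodup

/-- A rainbow vertex coloring: every two vertices are joined by a rainbow vertex path. -/
def IsRVColoring {V : Type*} (G : SimpleGraph V) {k : ℕ} (c : V → Fin k) : Prop :=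
  ∀ u v : V, ∃ p : G.Walk u v, IsRainbowPath G c p

/-- The rainbow vertex connection number. -/
noncomputable def rvc {V : Type*} (G : SimpleGraph V) : ℕ :=
  sInf {k | ∃ c : V → Fin k, IsRVColoring G c}

/-- The rainbow code of a vertex: its vector of distances to the color classes. -/
noncomputable def rainbowCode {V : Type*} (G : SimpleGraph V) {k : ℕ}
    (c : V → Fin k) (v : V) : Fin k → ℕ :=
  fun i => sInf {d | ∃ w, c w = i ∧ G.dist v w = d}

/-- A locating rainbow coloring: a rainbow vertex coloring whose rainbow codes
are pairwise distinct. -/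
def IsLocatingRVColoring {V : Type*} (G : SimpleGraph V) {k : ℕ} (c : V → Fin k) : Prop :=
  IsRVColoring G c ∧ Function.Injective (rainbowCode G c)

/-- The locating rainbow connection number. -/
noncomputable def rvcl {V : Type*} (G : SimpleGraph V) : ℕ :=
  sInf {k | ∃ c : V → Fin k, IsLocatingRVColoring G c}

/-- The edge corona `G ⋄ H`: one copy of `G` together with one copy of `H`
for each edge of `G`, where both endpoints of the edge are joined to
every vertex of the corresponding copy of `H`. -/
def edgeCorona {V W : Type*} (G : SimpleGraph V) (H : SimpleGraph W) :
    SimpleGraph (V ⊕ (G.edgeSet × W)) where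
  Adj x y :=
    match x, y with
    | .inl u, .inl v => G.Adj u v
    | .inl u, .inr (e, _) => u ∈ (e : Sym2 V)
    | .inr (e, _), .inl u => u ∈ (e : Sym2 V)
    | .inr (e, w), .inr (e', w') => e = e' ∧ H.Adj w w'
  symm := ⟨by
    rintro (u | ⟨e, w⟩) (v | ⟨e', w'⟩) h
    · exact h.symm
    · exact h
    · exact h
    · exact ⟨h.1.symm, h.2.symm⟩⟩
  loopless := ⟨by
    rintro (u | ⟨e, w⟩) h
    · exact G.irrefl h
    · exact H.irrefl h.2⟩

/-- A cut vertex: a vertex whose removal disconnects the graph. -/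
def IsCutVertex {V : Type*} (G : SimpleGraph V) (v : V) : Prop :=
  ¬ (G.induce {u | u ≠ v}).Connected

/-!
Every vertex of `C_m ⋄ H` is a cycle vertex or is joined to both ends of a cycle edge, so corona
distances exceed cycle distances by at most two; as every vertex of an even cycle is within
`m/2 - 1` of some end of any given edge, all distances are at most `m/2 + 1`. Conversely, the cycle
distance to the nearer end of the edge `{m/2, m/2 + 1}`, raised by one on cycle vertices and by two
on the copies of `H` over the other edges, is `1`-Lipschitz on the corona and vanishes on the copy
over `{m/2, m/2 + 1}`; on the copy over `{0, 1}` it equals `m/2 + 1`.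
-/

lemma Fin.val_sub_eq_ite {n : ℕ} (a b : Fin n) :
    (a - b).val = if b ≤ a then a.val - b.val else n + a.val - b.val := by
  have := Fin.intCast_val_sub_eq_sub_add_ite a b
  split_ifs at * with h <;> rw [Fin.le_iff_val_le_val] at h <;> omega

namespace SimpleGraph

section Metric

variable {V V' : Type*} {G : SimpleGraph V} {G' : SimpleGraph V'}

lemma Hom.edist_le (f : G →g G') (u v : V) : G'.edist (f u) (f v) ≤ G.edist u v := by
  by_cases h : G.edist u v = ⊤
  · simp [h]
  obtain ⟨p, hp⟩ := exists_walk_of_edist_ne_top h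
  rw [← hp, ← Walk.length_map f p]
  exact SimpleGraph.edist_le _

lemma Walk.apply_le_length_add {f : V → ℕ} (hf : ∀ x y, G.Adj x y → f x ≤ f y + 1)
    {u v : V} (p : G.Walk u v) : f u ≤ p.length + f v := by
  induction p with
  | nil => simp
  | cons h _ ih =>
    rw [Walk.length_cons]
    have := hf _ _ h
    omega

lemma apply_le_edist_add {f : V → ℕ} (hf : ∀ x y, G.Adj x y → f x ≤ f y + 1) (u v : V) :
    (f u : ℕ∞) ≤ G.edist u v + f v := by
  by_cases h : G.edist u v = ⊤
  · simp [h]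
  obtain ⟨p, hp⟩ := exists_walk_of_edist_ne_top h
  rw [← hp]
  exact_mod_cast p.apply_le_length_add hf

end Metric

section Cycle

variable {m : ℕ}

def cycleDist (u v : Fin m) : ℕ := min (v - u).val (u - v).val

lemma cycleDist_self (u : Fin m) : cycleDist u u = 0 := by simp [cycleDist, Fin.val_sub_eq_ite]

lemma cycleDist_le_of_adj {u v : Fin m} (h : (cycleGraph m).Adj u v) (t : Fin m) :
    cycleDist u t ≤ cycleDist v t + 1 := by
  rw [cycleGraph_adj'] at h
  have := t.is_lt
  simp only [cycleDist, Fin.val_sub_eq_ite, Fin.le_iff_val_le_val] at h ⊢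
  split_ifs at h ⊢ <;> omega

lemma cycleDist_le_half (u v : Fin m) : cycleDist u v ≤ m / 2 := by
  have := u.is_lt; have := v.is_lt
  simp only [cycleDist, Fin.val_sub_eq_ite, Fin.le_iff_val_le_val]
  split_ifs <;> omega

lemma min_cycleDist_add_one_le_half (hm : Even m) (u : Fin m) {a b : Fin m}
    (h : (cycleGraph m).Adj a b) : min (cycleDist u a) (cycleDist u b) + 1 ≤ m / 2 := by
  rw [cycleGraph_adj'] at h
  obtain ⟨k, rfl⟩ := hm
  have := u.is_lt; have := a.is_lt; have := b.is_lt
  simp only [cycleDist, Fin.val_sub_eq_ite, Fin.le_iff_val_le_val] at h ⊢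
  split_ifs at h ⊢ <;> omega

lemma exists_walk_cycleGraph_length_eq_val_sub (u v : Fin m) :
    ∃ p : (cycleGraph m).Walk u v, p.length = (v - u).val := by
  have : NeZero m := ⟨u.pos.ne'⟩
  generalize hd : (v - u).val = d
  induction d generalizing u with
  | zero =>
    obtain rfl : u = v := by
      have := u.is_lt; have := v.is_lt
      simp only [Fin.val_sub_eq_ite, Fin.le_iff_val_le_val] at hd
      ext; split_ifs at hd <;> omega
    exact ⟨.nil, rfl⟩
  | succ d ih =>
    have hone : (1 : Fin m).val = 1 := by
      rw [Fin.val_one']; exact Nat.mod_eq_of_lt (by have := (v - u).is_lt; omega)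
    have hadj : (cycleGraph m).Adj u (u + 1) := by
      rw [cycleGraph_adj', add_sub_cancel_left, hone]; exact Or.inr rfl
    obtain ⟨p, hp⟩ := ih (u + 1) (by
      have := u.is_lt; have := v.is_lt
      simp only [Fin.val_sub_eq_ite, Fin.val_add_eq_ite, Fin.le_iff_val_le_val, hone] at hd ⊢
      split_ifs at hd ⊢ <;> omega)
    exact ⟨.cons hadj p, by rw [Walk.length_cons, hp]⟩

lemma cycleGraph_edist (u v : Fin m) : (cycleGraph m).edist u v = cycleDist u v := by
  refine le_antisymm ?_ ?_
  · obtain ⟨p, hp⟩ := exists_walk_cycleGraph_length_eq_val_sub u v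
    obtain ⟨q, hq⟩ := exists_walk_cycleGraph_length_eq_val_sub v u
    rcases min_choice (v - u).val (u - v).val with h | h <;> rw [cycleDist, h]
    · exact hp ▸ edist_le p
    · exact hq ▸ q.length_reverse ▸ edist_le q.reverse
  · simpa [cycleDist_self] using
      apply_le_edist_add (fun x y h ↦ cycleDist_le_of_adj h v) u v

end Cycle

end SimpleGraph

open SimpleGraph

namespace edgeCorona

variable {V W : Type*} {G : SimpleGraph V} (H : SimpleGraph W)

def inlHom : G →g edgeCorona G H := ⟨Sum.inl, id⟩

lemma edist_inl_inl_le (u v : V) :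
    (edgeCorona G H).edist (.inl u) (.inl v) ≤ G.edist u v :=
  (inlHom H).edist_le u v

lemma edist_inl_inr_le (u : V) {e : G.edgeSet} {a : V} (ha : a ∈ (e : Sym2 V)) (w : W) :
    (edgeCorona G H).edist (.inl u) (.inr (e, w)) ≤ G.edist u a + 1 :=
  calc (edgeCorona G H).edist (.inl u) (.inr (e, w))
      ≤ (edgeCorona G H).edist (.inl u) (.inl a) + (edgeCorona G H).edist (.inl a) (.inr (e, w)) :=
        SimpleGraph.edist_triangle
    _ ≤ G.edist u a + 1 :=
        add_le_add (edist_inl_inl_le H u a) (edist_le_one_iff_adj_or_eq.mpr (.inl ha))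

lemma edist_inr_inr_le {e e' : G.edgeSet} {a b : V} (ha : a ∈ (e : Sym2 V))
    (hb : b ∈ (e' : Sym2 V)) (w w' : W) :
    (edgeCorona G H).edist (.inr (e, w)) (.inr (e', w')) ≤ G.edist a b + 2 :=
  calc (edgeCorona G H).edist (.inr (e, w)) (.inr (e', w'))
      ≤ (edgeCorona G H).edist (.inr (e, w)) (.inl a) +
          (edgeCorona G H).edist (.inl a) (.inr (e', w')) := SimpleGraph.edist_triangle
    _ ≤ 1 + (G.edist a b + 1) :=
        add_le_add (edist_le_one_iff_adj_or_eq.mpr (.inl ha)) (edist_inl_inr_le H a hb w')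
    _ = G.edist a b + 2 := by ring

variable (G) [DecidableEq V]

/-- When `g` is the distance to the nearer end of `e₀`, this is the corona distance to the copy
of `H` over `e₀`. -/
def potential (g : V → ℕ) (e₀ : Sym2 V) : V ⊕ (G.edgeSet × W) → ℕ :=
  Sum.elim (fun u ↦ g u + 1)
    fun x ↦ if (x.1 : Sym2 V) = e₀ then 0 else ((x.1 : Sym2 V).map g).inf + 2

variable {G} {g : V → ℕ} {e₀ : Sym2 V}

lemma potential_le_of_adj (hg : ∀ a b, G.Adj a b → g a ≤ g b + 1) (h₀ : ∀ a ∈ e₀, g a = 0)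
    {x y : V ⊕ (G.edgeSet × W)} (h : (edgeCorona G H).Adj x y) :
    potential G g e₀ x ≤ potential G g e₀ y + 1 := by
  rcases x with u | ⟨⟨e, he⟩, w⟩ <;> rcases y with v | ⟨⟨e', he'⟩, w'⟩
  · exact Nat.add_le_add_right (hg u v h) 1
  · induction e' using Sym2.ind with
    | _ a b =>
      have hab : G.Adj a b := he'
      have := hg a b hab; have := hg b a hab.symm
      simp only [potential, Sum.elim_inl, Sum.elim_inr, Sym2.map_mk, Sym2.inf_mk]
      split_ifs with h'
      · have := h₀ u (h' ▸ h); omega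
      · rcases Sym2.mem_iff.mp h with rfl | rfl <;> omega
  · induction e using Sym2.ind with
    | _ a b =>
      simp only [potential, Sum.elim_inl, Sum.elim_inr, Sym2.map_mk, Sym2.inf_mk]
      split_ifs
      · omega
      · rcases Sym2.mem_iff.mp h with rfl | rfl <;> omega
  · obtain rfl : e = e' := congrArg Subtype.val h.1
    exact Nat.le_succ _

lemma potential_le_edist (hg : ∀ a b, G.Adj a b → g a ≤ g b + 1) (h₀ : ∀ a ∈ e₀, g a = 0)
    (he₀ : e₀ ∈ G.edgeSet) (x : V ⊕ (G.edgeSet × W)) (w₀ : W) :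
    (potential G g e₀ x : ℕ∞) ≤ (edgeCorona G H).edist x (.inr (⟨e₀, he₀⟩, w₀)) := by
  simpa [potential] using
    apply_le_edist_add (fun _ _ ↦ potential_le_of_adj H hg h₀) x (.inr (⟨e₀, he₀⟩, w₀))

end edgeCorona

section CycleCorona

variable {W : Type*} (H : SimpleGraph W) {m : ℕ}

lemma edgeCorona_cycleGraph_edist_le (hm : Even m) (x y : Fin m ⊕ ((cycleGraph m).edgeSet × W)) :
    (edgeCorona (cycleGraph m) H).edist x y ≤ (m / 2 + 1 : ℕ) := by
  have inl_inr (u : Fin m) (e : (cycleGraph m).edgeSet) (w : W) :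
      (edgeCorona (cycleGraph m) H).edist (.inl u) (.inr (e, w)) ≤ (m / 2 + 1 : ℕ) := by
    obtain ⟨e, he⟩ := e
    induction e using Sym2.ind with
    | _ a b =>
      refine (edgeCorona.edist_inl_inr_le H u (Sym2.mem_mk_left a b) w).trans ?_
      rw [cycleGraph_edist]
      exact_mod_cast Nat.add_le_add_right (cycleDist_le_half u a) 1
  rcases x with u | ⟨e, w⟩ <;> rcases y with v | ⟨e', w'⟩
  · refine (edgeCorona.edist_inl_inl_le H u v).trans ?_
    rw [cycleGraph_edist]
    exact_mod_cast (cycleDist_le_half u v).trans (Nat.le_succ _)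
  · exact inl_inr u e' w'
  · exact edist_comm.trans_le (inl_inr v e w)
  · obtain ⟨e, he⟩ := e
    obtain ⟨e', he'⟩ := e'
    induction e using Sym2.ind with
    | _ a _ =>
      induction e' using Sym2.ind with
      | _ b b' =>
        have hclose := min_cycleDist_add_one_le_half hm a (he' : (cycleGraph m).Adj b b')
        obtain ⟨c, hc, hac⟩ : ∃ c ∈ s(b, b'), cycleDist a c + 1 ≤ m / 2 := by
          rcases min_choice (cycleDist a b) (cycleDist a b') with h | h <;> rw [h] at hclose
          exacts [⟨b, Sym2.mem_mk_left b b', hclose⟩, ⟨b', Sym2.mem_mk_right b b', hclose⟩]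
        refine (edgeCorona.edist_inr_inr_le H (Sym2.mem_mk_left _ _) hc w w').trans ?_
        rw [cycleGraph_edist]
        exact_mod_cast (by omega : cycleDist a c + 2 ≤ m / 2 + 1)

lemma exists_le_edgeCorona_cycleGraph_edist [Nonempty W] (hm : 4 ≤ m) :
    ∃ x y, ((m / 2 + 1 : ℕ) : ℕ∞) ≤ (edgeCorona (cycleGraph m) H).edist x y := by
  obtain ⟨w₀⟩ := ‹Nonempty W›
  let t : Fin m := ⟨m / 2, by omega⟩
  let t' : Fin m := ⟨m / 2 + 1, by omega⟩
  let a : Fin m := ⟨0, by omega⟩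
  let a' : Fin m := ⟨1, by omega⟩
  have adj {u v : Fin m} (h : v.val = u.val + 1) : s(u, v) ∈ (cycleGraph m).edgeSet := by
    have := v.is_lt
    simp only [mem_edgeSet, cycleGraph_adj', Fin.val_sub_eq_ite, Fin.le_iff_val_le_val]
    split_ifs <;> omega
  have hne : s(a, a') ≠ s(t, t') := by
    simp only [ne_eq, Sym2.eq_iff, Fin.ext_iff, a, a', t, t']
    omega
  let g (u : Fin m) : ℕ := min (cycleDist u t) (cycleDist u t')
  have hg (u v : Fin m) (h : (cycleGraph m).Adj u v) : g u ≤ g v + 1 := by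
    have := cycleDist_le_of_adj h t; have := cycleDist_le_of_adj h t'
    simp only [g]
    omega
  have h₀ (u : Fin m) (hu : u ∈ s(t, t')) : g u = 0 := by
    rcases Sym2.mem_iff.mp hu with rfl | rfl <;> simp [g, cycleDist_self]
  have hfar : m / 2 + 1 ≤ edgeCorona.potential _ g s(t, t') (.inr (⟨s(a, a'), adj rfl⟩, w₀)) := by
    simp only [edgeCorona.potential, Sum.elim_inr, if_neg hne, Sym2.map_mk, Sym2.inf_mk, g,
      cycleDist, Fin.val_sub_eq_ite, Fin.le_iff_val_le_val, a, a', t, t']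
    split_ifs <;> omega
  exact ⟨_, _, (Nat.cast_le.mpr hfar).trans
    (edgeCorona.potential_le_edist H hg h₀ (adj rfl) _ w₀)⟩

lemma edgeCorona_cycleGraph_ediam [Nonempty W] (hm : 4 ≤ m) (hme : Even m) :
    (edgeCorona (cycleGraph m) H).ediam = (m / 2 + 1 : ℕ) := by
  obtain ⟨x, y, hxy⟩ := exists_le_edgeCorona_cycleGraph_edist H hm
  exact le_antisymm (ediam_le_of_edist_le (edgeCorona_cycleGraph_edist_le H hme))
    (hxy.trans edist_le_ediam)

end CycleCorona

theorem stmt14 {W : Type*} [Fintype W] (H : SimpleGraph W) (m n : ℕ)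
    (hm : 4 ≤ m) (hme : Even m) (hn : Fintype.card W = n) (hn2 : 2 ≤ n) :
    (edgeCorona (SimpleGraph.cycleGraph m) H).diam = m / 2 + 1 := by
  have : Nonempty W := Fintype.card_pos_iff.mp (by omega)
  rw [diam, edgeCorona_cycleGraph_ediam H hm hme, ENat.toNat_natCast]
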